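/- Let s > 0, d₁, d₂ ≥ 1 and d = min(d₁, d₂), and let T : ℓ²(ℕ^{d₁}) → ℓ²(ℕ^{d₂}) be a bounded linear operator whose matrix satisfies, for every r > 0, |⟨T e_β, e_α⟩| ≤ C_r e^{−r(|α|^{1/(2s)} + |β|^{1/(2s)})} for some C_r > 0 and all α, β. Then for every c > 0 there exists C'_c > 0 such that σ_k(T) ≤ C'_c e^{−c k^{1/(2ds)}} for every k ≥ 1. In particular, ∑_{k=1}^∞ σ_k(T)^p < ∞ for every p > 0. -/

import Mathlib

/-!
Cut `T` down to the box `{α : αᵢ < M}` of multi-indices on the side of smaller dimension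
`d = min d₁ d₂`; the result has rank at most `M ^ d`. Outside the box `|α| ≥ M`, so the matrix
bound at rate `2r` splits as `e^{-r M^{1/(2s)}}` times a summable weight, and the crude estimate
`‖S‖ ≤ (∑ g) (∑ h)` for a matrix with `|S(α, β)| ≤ g β * h α` bounds the truncation error by
`A e^{-r M^{1/(2s)}}`. Taking `M` with `M ^ d < k ≤ (M + 1) ^ d` gives
`σ_k ≤ A' e^{-c k^{1/(2ds)}}`, with `c` as large as we like because `r` is arbitrary; such
stretched-exponential decay makes every `∑ σ_k ^ p` converge.
-/

open Real Filter
open scoped ENNReal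

/-- `|α| = α₁ + ⋯ + α_d` as a real number. -/
noncomputable def msz {d : ℕ} (α : Fin d → ℕ) : ℝ := (∑ i, α i : ℕ)

/-- The `k`-th singular value (`k ≥ 1`) of a bounded linear operator `T`:
`σ_k(T) = inf {‖T - T₀‖ : T₀ bounded linear of rank ≤ k - 1}`. -/
noncomputable def singValue {B₁ B₂ : Type*} [NormedAddCommGroup B₁] [NormedSpace ℂ B₁]
    [NormedAddCommGroup B₂] [NormedSpace ℂ B₂] (T : B₁ →L[ℂ] B₂) (k : ℕ) : ℝ :=
  sInf {r : ℝ | ∃ T₀ : B₁ →L[ℂ] B₂,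
    Module.rank ℂ (LinearMap.range (T₀ : B₁ →ₗ[ℂ] B₂)) ≤ (k - 1 : ℕ) ∧ r = ‖T - T₀‖}

namespace lp

variable {𝕜 : Type*} [NontriviallyNormedField 𝕜] {ι κ : Type*} [DecidableEq ι] [DecidableEq κ]
  {p q : ℝ≥0∞} [Fact (1 ≤ p)] [Fact (1 ≤ q)]

theorem norm_le_tsum_of_norm_apply_le (hp : p ≠ ∞) {z : lp (fun _ : ι => 𝕜) p} {h : ι → ℝ}
    (hh : Summable h) (hz : ∀ i, ‖z i‖ ≤ h i) : ‖z‖ ≤ ∑' i, h i :=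
  (lp.hasSum_single hp z).norm_le_of_bounded hh.hasSum fun i => by
    rw [lp.norm_single (zero_lt_one.trans_le Fact.out)]
    exact hz i

theorem opNorm_le_of_matrix_le (hp : p ≠ ∞) (hq : q ≠ ∞)
    (T : lp (fun _ : ι => 𝕜) p →L[𝕜] lp (fun _ : κ => 𝕜) q) {g : ι → ℝ} {h : κ → ℝ}
    (hg0 : 0 ≤ g) (hh0 : 0 ≤ h) (hg : Summable g) (hh : Summable h)
    (hT : ∀ i j, ‖T (lp.single p i 1) j‖ ≤ g i * h j) :
    ‖T‖ ≤ (∑' i, g i) * ∑' j, h j := by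
  have hcol : ∀ i, ‖T (lp.single p i 1)‖ ≤ g i * ∑' j, h j := fun i => by
    rw [← tsum_mul_left]
    exact norm_le_tsum_of_norm_apply_le hq (hh.mul_left _) (hT i)
  have hcol0 : ∀ i, 0 ≤ g i * ∑' j, h j := fun i => mul_nonneg (hg0 i) (tsum_nonneg hh0)
  refine T.opNorm_le_bound (mul_nonneg (tsum_nonneg hg0) (tsum_nonneg hh0)) fun x => ?_
  have hx : ∀ i, ‖x i‖ ≤ ‖x‖ := lp.norm_apply_le_norm (zero_lt_one.trans_le Fact.out).ne' x
  have hsum : Summable fun i => ‖x i‖ * (g i * ∑' j, h j) :=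
    .of_nonneg_of_le (fun i => mul_nonneg (norm_nonneg _) (hcol0 i))
      (fun i => mul_le_mul_of_nonneg_right (hx i) (hcol0 i)) ((hg.mul_right _).mul_left ‖x‖)
  have hTx : HasSum (fun i => x i • T (lp.single p i 1)) (T x) := by
    refine ((lp.hasSum_single hp x).mapL T).congr_fun fun i => ?_
    rw [← map_smul, ← lp.single_smul, smul_eq_mul, mul_one]
  calc ‖T x‖ ≤ ∑' i, ‖x i‖ * (g i * ∑' j, h j) :=
        hTx.norm_le_of_bounded hsum.hasSum fun i => by
          rw [norm_smul]
          exact mul_le_mul_of_nonneg_left (hcol i) (norm_nonneg _)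
    _ ≤ ∑' i, ‖x‖ * (g i * ∑' j, h j) :=
        hsum.tsum_le_tsum (fun i => mul_le_mul_of_nonneg_right (hx i) (hcol0 i))
          ((hg.mul_right _).mul_left ‖x‖)
    _ = (∑' i, g i) * (∑' j, h j) * ‖x‖ := by
        rw [tsum_mul_left, tsum_mul_right]; ring

variable (𝕜 p) in
noncomputable def coordProj (F : Finset ι) : lp (fun _ : ι => 𝕜) p →L[𝕜] lp (fun _ : ι => 𝕜) p :=
  ∑ i ∈ F, (lp.singleContinuousLinearMap 𝕜 _ p i).comp (lp.evalCLM 𝕜 _ p i)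

theorem coordProj_apply (F : Finset ι) (x : lp (fun _ : ι => 𝕜) p) :
    coordProj 𝕜 p F x = ∑ i ∈ F, lp.single p i (x i) := by
  simp [coordProj, lp.evalCLM]

theorem coordProj_apply_apply (F : Finset ι) (x : lp (fun _ : ι => 𝕜) p) (j : ι) :
    coordProj 𝕜 p F x j = if j ∈ F then x j else 0 := by
  rw [coordProj_apply, lp.coeFn_sum, Finset.sum_apply]
  simp [Finset.sum_pi_single]

theorem coordProj_single (F : Finset ι) (i : ι) (a : 𝕜) :
    coordProj 𝕜 p F (lp.single p i a) = if i ∈ F then lp.single p i a else 0 := by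
  ext j
  rw [coordProj_apply_apply]
  by_cases hi : i ∈ F <;> by_cases hj : j ∈ F <;> by_cases hji : j = i <;> simp_all

theorem rank_coordProj_le (F : Finset ι) :
    (coordProj 𝕜 p F : lp (fun _ : ι => 𝕜) p →ₗ[𝕜] lp (fun _ : ι => 𝕜) p).rank ≤ F.card := by
  classical
  have hrange : LinearMap.range (coordProj 𝕜 p F : lp (fun _ : ι => 𝕜) p →ₗ[𝕜] _) ≤
      Submodule.span 𝕜 (F.image fun i => lp.single p i (1 : 𝕜) : Set (lp (fun _ : ι => 𝕜) p)) := by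
    rintro _ ⟨x, rfl⟩
    rw [ContinuousLinearMap.coe_coe, coordProj_apply]
    refine Submodule.sum_mem _ fun i hi => ?_
    rw [← mul_one (x i), ← smul_eq_mul, lp.single_smul]
    exact Submodule.smul_mem _ _ (Submodule.subset_span (Finset.mem_image_of_mem _ hi))
  exact (Submodule.rank_mono hrange).trans <| (rank_span_finset_le _).trans <|
    by exact_mod_cast Finset.card_image_le

section Truncation

variable (hp : p ≠ ∞) (hq : q ≠ ∞) (T : lp (fun _ : ι => 𝕜) p →L[𝕜] lp (fun _ : κ => 𝕜) q)
  {g : ι → ℝ} {h : κ → ℝ} (hg0 : 0 ≤ g) (hh0 : 0 ≤ h) (hg : Summable g) (hh : Summable h)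
  (hT : ∀ i j, ‖T (lp.single p i 1) j‖ ≤ g i * h j)
include hp hq hg0 hh0 hg hh hT

theorem opNorm_sub_coordProj_comp_le (F : Finset κ) :
    ‖T - coordProj 𝕜 q F ∘L T‖ ≤ (∑' i, g i) * ∑' j, (↑F : Set κ)ᶜ.indicator h j := by
  refine opNorm_le_of_matrix_le hp hq _ hg0 (Set.indicator_nonneg fun j _ => hh0 j) hg
    (hh.indicator _) fun i j => ?_
  rw [sub_apply, ContinuousLinearMap.comp_apply, lp.coeFn_sub,
    Pi.sub_apply, coordProj_apply_apply]
  by_cases hj : j ∈ F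
  · simp [hj]
  · simpa [hj] using hT i j

theorem opNorm_sub_comp_coordProj_le (F : Finset ι) :
    ‖T - T ∘L coordProj 𝕜 p F‖ ≤ (∑' i, (↑F : Set ι)ᶜ.indicator g i) * ∑' j, h j := by
  refine opNorm_le_of_matrix_le hp hq _ (Set.indicator_nonneg fun i _ => hg0 i) hh0
    (hg.indicator _) hh fun i j => ?_
  rw [sub_apply, ContinuousLinearMap.comp_apply, coordProj_single]
  by_cases hi : i ∈ F
  · simp [hi]
  · simpa [hi] using hT i j

end Truncation

end lp

theorem lp.norm_inner_single_one_right {𝕜 ι : Type*} [RCLike 𝕜] [DecidableEq ι]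
    (f : lp (fun _ : ι => 𝕜) 2) (i : ι) : ‖(inner 𝕜 f (lp.single 2 i 1) : 𝕜)‖ = ‖f i‖ := by
  rw [lp.inner_single_right, RCLike.inner_apply, one_mul, RCLike.norm_conj]

theorem summable_exp_neg_mul_rpow {t ε : ℝ} (ht : 0 < t) (hε : 0 < ε) :
    Summable fun n : ℕ => exp (-(t * (n : ℝ) ^ ε)) := by
  have hlim : Tendsto (fun n : ℕ => (n : ℝ) ^ ε) atTop atTop :=
    (tendsto_rpow_atTop hε).comp tendsto_natCast_atTop_atTop
  have ho := (isLittleO_exp_neg_mul_rpow_atTop ht (-2 / ε)).comp_tendsto hlim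
  refine summable_of_isBigO_nat (Real.summable_nat_rpow.mpr (by norm_num : (-2 : ℝ) < -1)) ?_
  refine (ho.isBigO.congr_left fun n => by simp [neg_mul]).congr_right fun n => ?_
  simp only [Function.comp_apply]
  rw [← rpow_mul (Nat.cast_nonneg n), mul_div_cancel₀ _ hε.ne']

theorem summable_pi_prod_of_nonneg {κ : Type*} {g : κ → ℝ} (hg0 : 0 ≤ g) (hg : Summable g) (d : ℕ) :
    Summable fun α : Fin d → κ => ∏ i, g (α i) := by
  induction d with
  | zero => exact .of_finite
  | succ d ih =>
    have := (hg.mul_of_nonneg ih hg0 fun α => Finset.prod_nonneg fun i _ => hg0 _).comp_injective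
      (Fin.consEquiv fun _ => κ).symm.injective
    refine this.congr fun α => ?_
    simp [Fin.consEquiv, Fin.prod_univ_succ, Fin.tail]

theorem apply_le_msz {d : ℕ} (α : Fin d → ℕ) (i : Fin d) : (α i : ℝ) ≤ msz α := by
  unfold msz
  exact_mod_cast Finset.single_le_sum (fun j _ => Nat.zero_le (α j)) (Finset.mem_univ i)

def box (d M : ℕ) : Finset (Fin d → ℕ) := Fintype.piFinset fun _ => Finset.range M

theorem card_box (d M : ℕ) : (box d M).card = M ^ d := by
  simp [box]

theorem le_msz_of_notMem_box {d M : ℕ} {α : Fin d → ℕ} (h : α ∉ box d M) : (M : ℝ) ≤ msz α := by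
  simp only [box, Fintype.mem_piFinset, Finset.mem_range, not_forall, not_lt] at h
  obtain ⟨i, hi⟩ := h
  exact (Nat.cast_le.mpr hi).trans (apply_le_msz α i)

noncomputable def expWeight {d : ℕ} (t ε : ℝ) (α : Fin d → ℕ) : ℝ := exp (-(t * msz α ^ ε))

theorem summable_expWeight {d : ℕ} {t ε : ℝ} (ht : 0 < t) (hε : 0 < ε) :
    Summable (expWeight (d := d) t ε) := by
  rcases Nat.eq_zero_or_pos d with rfl | hd
  · exact .of_finite
  have hprod := summable_pi_prod_of_nonneg (fun n => (exp_pos _).le)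
    (summable_exp_neg_mul_rpow (div_pos ht (Nat.cast_pos.mpr hd)) hε) d
  refine hprod.of_nonneg_of_le (fun α => (exp_pos _).le) fun α => ?_
  -- `αᵢ ≤ |α|` for each of the `d` coordinates, so `e^{-t|α|^ε} ≤ ∏ᵢ e^{-(t/d) αᵢ^ε}`
  rw [expWeight, ← exp_sum, exp_le_exp, Finset.sum_neg_distrib, ← Finset.mul_sum, neg_le_neg_iff]
  calc t / d * ∑ i, (α i : ℝ) ^ ε ≤ t / d * ∑ _i : Fin d, msz α ^ ε := by
        gcongr with i; exact apply_le_msz α i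
    _ = t * msz α ^ ε := by
        rw [Finset.sum_const, Finset.card_univ, Fintype.card_fin, nsmul_eq_mul]
        field_simp

theorem tsum_expWeight_pos {d : ℕ} {t ε : ℝ} (ht : 0 < t) (hε : 0 < ε) :
    0 < ∑' α, expWeight (d := d) t ε α :=
  (summable_expWeight ht hε).tsum_pos (fun _ => (exp_pos _).le) 0 (exp_pos _)

theorem tsum_indicator_expWeight_le {d : ℕ} {t ε : ℝ} (ht : 0 < t) (hε : 0 < ε) (M : ℕ) :
    ∑' α, (↑(box d M) : Set (Fin d → ℕ))ᶜ.indicator (expWeight (2 * t) ε) α ≤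
      exp (-(t * (M : ℝ) ^ ε)) * ∑' α, expWeight (d := d) t ε α := by
  rw [← tsum_mul_left]
  refine ((summable_expWeight (by positivity) hε).indicator _).tsum_le_tsum (fun α => ?_)
    ((summable_expWeight ht hε).mul_left _)
  by_cases hα : α ∈ box d M
  · rw [Set.indicator_of_notMem (by simpa using hα)]
    exact mul_nonneg (exp_pos _).le (exp_pos _).le
  · have hM : (M : ℝ) ^ ε ≤ msz α ^ ε :=
      rpow_le_rpow (Nat.cast_nonneg M) (le_msz_of_notMem_box hα) hε.le
    rw [Set.indicator_of_mem (by simpa using hα), expWeight, expWeight, ← exp_add, exp_le_exp]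
    nlinarith

section Approximation

open lp

variable {𝕜 : Type*} [NontriviallyNormedField 𝕜] {p q : ℝ≥0∞} [Fact (1 ≤ p)] [Fact (1 ≤ q)]

theorem exists_approx_of_norm_apply_single_le (hp : p ≠ ∞) (hq : q ≠ ∞) {d₁ d₂ : ℕ}
    (T : lp (fun _ : Fin d₁ → ℕ => 𝕜) p →L[𝕜] lp (fun _ : Fin d₂ → ℕ => 𝕜) q)
    {C r ε : ℝ} (hC : 0 < C) (hr : 0 < r) (hε : 0 < ε)
    (hT : ∀ α β, ‖T (lp.single p β 1) α‖ ≤ C * exp (-(2 * r * (msz α ^ ε + msz β ^ ε)))) :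
    ∃ A > 0, ∀ M : ℕ, ∃ T₀ : lp (fun _ : Fin d₁ → ℕ => 𝕜) p →L[𝕜] lp (fun _ : Fin d₂ → ℕ => 𝕜) q,
      (T₀ : lp (fun _ : Fin d₁ → ℕ => 𝕜) p →ₗ[𝕜] lp (fun _ : Fin d₂ → ℕ => 𝕜) q).rank ≤
        ↑(M ^ min d₁ d₂) ∧ ‖T - T₀‖ ≤ A * exp (-(r * (M : ℝ) ^ ε)) := by
  have hmat : ∀ β α, ‖T (lp.single p β 1) α‖ ≤
      C * (expWeight (2 * r) ε β * expWeight (2 * r) ε α) := fun β α => by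
    refine (hT α β).trans_eq ?_
    rw [expWeight, expWeight, ← exp_add]
    ring_nf
  have hw0 : ∀ {d} (t : ℝ), 0 ≤ expWeight (d := d) t ε := fun t α => (exp_pos _).le
  have hw : ∀ {d}, Summable (expWeight (d := d) (2 * r) ε) := summable_expWeight (by positivity) hε
  have hS : ∀ {d}, 0 < ∑' α, expWeight (d := d) (2 * r) ε α :=
    tsum_expWeight_pos (by positivity) hε
  rcases le_total d₂ d₁ with hd | hd
  · refine ⟨C * (∑' β : Fin d₁ → ℕ, expWeight (2 * r) ε β) * ∑' α : Fin d₂ → ℕ, expWeight r ε α,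
      mul_pos (mul_pos hC hS) (tsum_expWeight_pos hr hε),
      fun M => ⟨coordProj 𝕜 q (box d₂ M) ∘L T, ?_, ?_⟩⟩
    · rw [min_eq_right hd, ← card_box d₂ M]
      exact (LinearMap.rank_comp_le_left T.toLinearMap _).trans (rank_coordProj_le _)
    · refine (opNorm_sub_coordProj_comp_le hp hq T (fun β => mul_nonneg hC.le (hw0 _ β)) (hw0 _)
        (hw.mul_left C) hw (fun β α => (hmat β α).trans_eq (mul_assoc _ _ _).symm)
        (box d₂ M)).trans ?_
      rw [tsum_mul_left]
      exact (mul_le_mul_of_nonneg_left (tsum_indicator_expWeight_le hr hε M)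
        (mul_pos hC hS).le).trans_eq (by ring)
  · refine ⟨C * (∑' β : Fin d₁ → ℕ, expWeight r ε β) * ∑' α : Fin d₂ → ℕ, expWeight (2 * r) ε α,
      mul_pos (mul_pos hC (tsum_expWeight_pos hr hε)) hS,
      fun M => ⟨T ∘L coordProj 𝕜 p (box d₁ M), ?_, ?_⟩⟩
    · rw [min_eq_left hd, ← card_box d₁ M]
      exact (LinearMap.rank_comp_le_right _ T.toLinearMap).trans (rank_coordProj_le _)
    · refine (opNorm_sub_comp_coordProj_le hp hq T (hw0 _) (fun α => mul_nonneg hC.le (hw0 _ α))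
        hw (hw.mul_left C) (fun β α => (hmat β α).trans_eq (by ring)) (box d₁ M)).trans ?_
      rw [tsum_mul_left]
      exact (mul_le_mul_of_nonneg_right (tsum_indicator_expWeight_le hr hε M)
        (mul_pos hC hS).le).trans_eq (by ring)

end Approximation

theorem Nat.exists_pow_lt_le_add_one_pow {d k : ℕ} (hd : d ≠ 0) (hk : k ≠ 0) :
    ∃ M, M ^ d < k ∧ k ≤ (M + 1) ^ d := by
  classical
  have hex : ∃ n, k ≤ (n + 1) ^ d := ⟨k, (Nat.le_succ k).trans (Nat.le_self_pow hd _)⟩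
  refine ⟨Nat.find hex, ?_, Nat.find_spec hex⟩
  rcases h : Nat.find hex with _ | m
  · simpa [zero_pow hd] using Nat.pos_of_ne_zero hk
  · exact lt_of_not_ge (Nat.find_min hex (h ▸ Nat.lt_succ_self m))

theorem Real.add_one_rpow_le {x ε : ℝ} (hx : 0 ≤ x) (hε : 0 ≤ ε) :
    (x + 1) ^ ε ≤ 2 ^ ε * (x ^ ε + 1) := by
  rcases le_total x 1 with hx1 | hx1
  · calc (x + 1) ^ ε ≤ 2 ^ ε := rpow_le_rpow (by positivity) (by linarith) hε
      _ ≤ 2 ^ ε * (x ^ ε + 1) :=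
        le_mul_of_one_le_right (by positivity) (by linarith [rpow_nonneg hx ε])
  · calc (x + 1) ^ ε ≤ (2 * x) ^ ε := rpow_le_rpow (by positivity) (by linarith) hε
      _ = 2 ^ ε * x ^ ε := mul_rpow zero_le_two hx
      _ ≤ 2 ^ ε * (x ^ ε + 1) := by gcongr; linarith

section SingularValues

variable {B₁ B₂ : Type*} [NormedAddCommGroup B₁] [NormedSpace ℂ B₁] [NormedAddCommGroup B₂]
  [NormedSpace ℂ B₂] (T : B₁ →L[ℂ] B₂)

theorem singValue_nonneg (k : ℕ) : 0 ≤ singValue T k :=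
  Real.sInf_nonneg <| by rintro _ ⟨T₀, -, rfl⟩; exact norm_nonneg _

theorem singValue_le_norm_sub {k : ℕ} (T₀ : B₁ →L[ℂ] B₂)
    (h : (T₀ : B₁ →ₗ[ℂ] B₂).rank ≤ (k - 1 : ℕ)) : singValue T k ≤ ‖T - T₀‖ :=
  csInf_le ⟨0, by rintro _ ⟨T₁, -, rfl⟩; exact norm_nonneg _⟩ ⟨T₀, h, rfl⟩

theorem singValue_le_of_forall_exists_rank_le {d : ℕ} (hd : d ≠ 0) {A c ε : ℝ} (hA : 0 ≤ A)
    (hc : 0 ≤ c) (hε : 0 ≤ ε)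
    (happrox : ∀ M : ℕ, ∃ T₀ : B₁ →L[ℂ] B₂,
      (T₀ : B₁ →ₗ[ℂ] B₂).rank ≤ ↑(M ^ d) ∧ ‖T - T₀‖ ≤ A * exp (-(c * 2 ^ ε * (M : ℝ) ^ ε)))
    {k : ℕ} (hk : 1 ≤ k) :
    singValue T k ≤ A * exp (c * 2 ^ ε) * exp (-(c * (k : ℝ) ^ (ε / d))) := by
  obtain ⟨M, hMk, hkM⟩ := Nat.exists_pow_lt_le_add_one_pow hd (by omega : k ≠ 0)
  obtain ⟨T₀, hrank, hnorm⟩ := happrox M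
  have hkM' : (k : ℝ) ^ (ε / d) ≤ ((M : ℝ) + 1) ^ ε :=
    calc (k : ℝ) ^ (ε / d) ≤ (((M : ℝ) + 1) ^ d) ^ (ε / d) :=
          rpow_le_rpow (Nat.cast_nonneg k) (by exact_mod_cast hkM) (by positivity)
      _ = ((M : ℝ) + 1) ^ ε := by
          rw [← rpow_natCast, ← rpow_mul (by positivity), mul_div_cancel₀ _ (by exact_mod_cast hd)]
  have hexp : c * (k : ℝ) ^ (ε / d) ≤ c * 2 ^ ε * ((M : ℝ) ^ ε + 1) := by
    rw [mul_assoc]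
    exact mul_le_mul_of_nonneg_left (hkM'.trans (add_one_rpow_le M.cast_nonneg hε)) hc
  calc singValue T k ≤ ‖T - T₀‖ :=
        singValue_le_norm_sub T T₀ (hrank.trans (by exact_mod_cast Nat.le_sub_one_of_lt hMk))
    _ ≤ A * exp (-(c * 2 ^ ε * (M : ℝ) ^ ε)) := hnorm
    _ ≤ A * exp (c * 2 ^ ε) * exp (-(c * (k : ℝ) ^ (ε / d))) := by
        rw [mul_assoc A, ← exp_add]
        gcongr
        linarith

end SingularValues

theorem summable_rpow_of_le_mul_exp {f : ℕ → ℝ} (hf0 : 0 ≤ f) {C c γ p : ℝ} (hC : 0 ≤ C)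
    (hc : 0 < c) (hγ : 0 < γ) (hp : 0 < p)
    (hf : ∀ k, f k ≤ C * exp (-(c * ((k + 1 : ℕ) : ℝ) ^ γ))) :
    Summable fun k => f k ^ p := by
  have hsum := ((summable_nat_add_iff 1).mpr
    (summable_exp_neg_mul_rpow (mul_pos hp hc) hγ)).mul_left (C ^ p)
  refine hsum.of_nonneg_of_le (fun k => rpow_nonneg (hf0 k) p) fun k => ?_
  calc f k ^ p ≤ (C * exp (-(c * ((k + 1 : ℕ) : ℝ) ^ γ))) ^ p := rpow_le_rpow (hf0 k) (hf k) hp.le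
    _ = C ^ p * exp (-(p * c * ((k + 1 : ℕ) : ℝ) ^ γ)) := by
        rw [mul_rpow hC (exp_pos _).le, ← exp_mul]
        ring_nf

/-- If the matrix of a bounded operator `T : ℓ²(ℕ^{d₁}) → ℓ²(ℕ^{d₂})`
satisfies, for every `r > 0`, `|⟨T e_β, e_α⟩| ≤ C_r e^{-r(|α|^{1/(2s)} + |β|^{1/(2s)})}`
(Beurling–Pilipović kernel of order `s`), then with `d = min(d₁,d₂)`, for every `c > 0`
there is `C'_c > 0` with `σ_k(T) ≤ C'_c e^{-c k^{1/(2ds)}}` for all `k ≥ 1`; in particular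
`∑_k σ_k(T)^p < ∞` for every `p > 0`. -/
theorem stmt12
    (s : ℝ) (hs : 0 < s) (d₁ d₂ : ℕ) (hd₁ : 1 ≤ d₁) (hd₂ : 1 ≤ d₂)
    (T : lp (fun _ : (Fin d₁ → ℕ) => ℂ) 2 →L[ℂ] lp (fun _ : (Fin d₂ → ℕ) => ℂ) 2)
    (ha : ∀ r > (0:ℝ), ∃ C > (0:ℝ), ∀ (α : Fin d₂ → ℕ) (β : Fin d₁ → ℕ),
      ‖inner (𝕜 := ℂ) (T (lp.single 2 β 1)) (lp.single 2 α 1)‖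
        ≤ C * Real.exp (-(r * (msz α ^ (1/(2*s)) + msz β ^ (1/(2*s)))))) :
    (∀ c > (0:ℝ), ∃ C' > (0:ℝ), ∀ k : ℕ, 1 ≤ k →
      singValue T k ≤ C' * Real.exp (-(c * (k : ℝ) ^ (1/(2*(min d₁ d₂ : ℝ)*s))))) ∧
    (∀ p > (0:ℝ), Summable fun k : ℕ => singValue T (k + 1) ^ p) := by
  have hε : 0 < 1 / (2 * s) := by positivity
  have hd : min d₁ d₂ ≠ 0 := by omega
  have hγ : 1 / (2 * s) / ((min d₁ d₂ : ℕ) : ℝ) = 1 / (2 * (min d₁ d₂ : ℝ) * s) := by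
    rw [Nat.cast_min, div_div, mul_right_comm]
  have hdecay : ∀ c > (0:ℝ), ∃ C' > (0:ℝ), ∀ k : ℕ, 1 ≤ k →
      singValue T k ≤ C' * Real.exp (-(c * (k : ℝ) ^ (1/(2*(min d₁ d₂ : ℝ)*s)))) := by
    intro c hc
    obtain ⟨C, hC, hmat⟩ := ha (2 * (c * 2 ^ (1 / (2 * s)))) (by positivity)
    obtain ⟨A, hA, happrox⟩ := exists_approx_of_norm_apply_single_le (r := c * 2 ^ (1 / (2 * s)))
      (by norm_num) (by norm_num) T hC (by positivity) hε fun α β => by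
        simpa only [lp.norm_inner_single_one_right] using hmat α β
    refine ⟨A * exp (c * 2 ^ (1 / (2 * s))), by positivity, fun k hk => ?_⟩
    rw [← hγ]
    exact singValue_le_of_forall_exists_rank_le T hd hA.le hc.le hε.le happrox hk
  refine ⟨hdecay, fun p hp => ?_⟩
  obtain ⟨C', hC', hC'k⟩ := hdecay 1 one_pos
  have hγpos : 0 < 1 / (2 * (min d₁ d₂ : ℝ) * s) :=
    hγ ▸ div_pos hε (Nat.cast_pos.mpr (Nat.pos_of_ne_zero hd))
  exact summable_rpow_of_le_mul_exp (fun k => singValue_nonneg T _) hC'.le one_pos hγpos hp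
    fun k => hC'k (k + 1) (by omega)
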